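/- arXiv:2604.00418 — 6 statements merged into one kernel-verified Lean document; each statement's English description precedes it below -/
import Mathlib

section
/- For integers n and k with 2 ≤ k and 2k ≤ n, the inequality k·C(n−k−2, k−2) ≤ (k−1)·C(n−k−1, k−2) holds if and only if n ≤ k²−k+1. -/
theorem stmt_2 (n k : ℕ) (hk : 2 ≤ k) (hn : 2 * k ≤ n) :
    k * Nat.choose (n - k - 2) (k - 2) ≤ (k - 1) * Nat.choose (n - k - 1) (k - 2) ↔
      n ≤ k ^ 2 - k + 1 := by
  set r := k - 2 with hr
  obtain ⟨M, hM⟩ : ∃ M, n - k - 1 = M + 1 := ⟨n - k - 2, by omega⟩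
  have e1 : n - k - 2 = M := by omega
  have hrM : r ≤ M := by omega
  rw [e1, hM]
  have hC : 0 < Nat.choose (M + 1) r := Nat.choose_pos (by omega)
  have hkey : Nat.choose M r * (M + 1) = Nat.choose (M + 1) r * (M + 1 - r) :=
    Nat.choose_mul_succ_eq M r
  have h1 : (k * Nat.choose M r ≤ (k - 1) * Nat.choose (M + 1) r) ↔
      k * (M + 1 - r) ≤ (k - 1) * (M + 1) := by
    constructor
    · intro h
      have h2 : k * Nat.choose M r * (M + 1) ≤ (k - 1) * Nat.choose (M + 1) r * (M + 1) :=
        Nat.mul_le_mul_right _ h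
      have h3 : Nat.choose (M + 1) r * (k * (M + 1 - r)) ≤
          Nat.choose (M + 1) r * ((k - 1) * (M + 1)) := by
        calc Nat.choose (M + 1) r * (k * (M + 1 - r))
            = k * (Nat.choose M r * (M + 1)) := by rw [hkey]; ring
          _ = k * Nat.choose M r * (M + 1) := by ring
          _ ≤ (k - 1) * Nat.choose (M + 1) r * (M + 1) := h2
          _ = Nat.choose (M + 1) r * ((k - 1) * (M + 1)) := by ring
      exact Nat.le_of_mul_le_mul_left h3 hC
    · intro h
      have h3 : Nat.choose (M + 1) r * (k * (M + 1 - r)) ≤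
          Nat.choose (M + 1) r * ((k - 1) * (M + 1)) :=
        Nat.mul_le_mul_left _ h
      have h2 : k * Nat.choose M r * (M + 1) ≤ (k - 1) * Nat.choose (M + 1) r * (M + 1) := by
        calc k * Nat.choose M r * (M + 1)
            = k * (Nat.choose M r * (M + 1)) := by ring
          _ = Nat.choose (M + 1) r * (k * (M + 1 - r)) := by rw [hkey]; ring
          _ ≤ Nat.choose (M + 1) r * ((k - 1) * (M + 1)) := h3
          _ = (k - 1) * Nat.choose (M + 1) r * (M + 1) := by ring
      exact Nat.le_of_mul_le_mul_right h2 (by omega)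
  rw [h1]
  have hM1 : (M : ℤ) + 1 = (n : ℤ) - k - 1 := by omega
  have hrZ : (r : ℤ) = (k : ℤ) - 2 := by omega
  have hkk : k ≤ k ^ 2 := by nlinarith
  zify [hrM, show (1:ℕ) ≤ k by omega, hkk]
  have hsub : ((M + 1 - r : ℕ) : ℤ) = (M : ℤ) + 1 - r := by omega
  constructor
  · intro h
    nlinarith [h, hM1, hrZ, hsub]
  · intro h
    nlinarith [h, hM1, hrZ, hsub]
end

section
/- For integers n, k with k ≥ 3 and 3k−3 ≤ n < k²−k+1, the inequality (k²−n)/(n(k−1)) · C(n,k) > C(n−2, k−2) holds. -/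
lemma aux_id (m j : ℕ) :
    (m + 2) * (m + 1) * Nat.choose m j = (j + 2) * (j + 1) * Nat.choose (m + 2) (j + 2) := by
  have h1 := Nat.add_one_mul_choose_eq m j
  have h2 := Nat.add_one_mul_choose_eq (m + 1) (j + 1)
  rw [show m + 1 + 1 = m + 2 by ring, show j + 1 + 1 = j + 2 by ring] at h2
  calc (m + 2) * (m + 1) * Nat.choose m j = (m + 2) * ((m + 1) * Nat.choose m j) := by ring
    _ = (m + 2) * (Nat.choose (m + 1) (j + 1) * (j + 1)) := by rw [h1]
    _ = ((m + 2) * Nat.choose (m + 1) (j + 1)) * (j + 1) := by ring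
    _ = (Nat.choose (m + 2) (j + 2) * (j + 2)) * (j + 1) := by rw [h2]
    _ = (j + 2) * (j + 1) * Nat.choose (m + 2) (j + 2) := by ring

theorem stmt_3 (n k : ℕ) (hk : 3 ≤ k) (hn1 : 3 * k - 3 ≤ n) (hn2 : n < k ^ 2 - k + 1) :
    (Nat.choose (n - 2) (k - 2) : ℝ) <
      ((k : ℝ) ^ 2 - n) / ((n : ℝ) * ((k : ℝ) - 1)) * Nat.choose n k := by
  obtain ⟨j, rfl⟩ : ∃ j, k = j + 3 := ⟨k - 3, by omega⟩
  obtain ⟨m, rfl⟩ : ∃ m, n = 3 * j + 6 + m := ⟨n - (3 * j + 6), by omega⟩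
  have hm : m ≤ j ^ 2 + 2 * j := by
    have hsq : (j + 3) ^ 2 = j ^ 2 + 6 * j + 9 := by ring
    omega
  -- rewrite choose indices
  have e1 : 3 * j + 6 + m - 2 = (3 * j + 4 + m) := by omega
  have e2 : j + 3 - 2 = j + 1 := by omega
  rw [e1, e2]
  set c : ℝ := (Nat.choose (3 * j + 4 + m) (j + 1) : ℝ) with hc
  set C : ℝ := (Nat.choose (3 * j + 6 + m) (j + 3) : ℝ) with hC
  have hcpos : 0 < c := by
    have : 0 < Nat.choose (3 * j + 4 + m) (j + 1) := Nat.choose_pos (by omega)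
    rw [hc]; exact_mod_cast this
  have hid : ((3 * j + 6 + m : ℕ) : ℝ) * ((3 * j + 5 + m : ℕ) : ℝ) * c
      = ((j + 3 : ℕ) : ℝ) * ((j + 2 : ℕ) : ℝ) * C := by
    have := aux_id (3 * j + 4 + m) (j + 1)
    have h' : (3 * j + 6 + m) * (3 * j + 5 + m) * Nat.choose (3 * j + 4 + m) (j + 1)
        = (j + 3) * (j + 2) * Nat.choose (3 * j + 6 + m) (j + 3) := by
      convert this using 3 <;> omega
    rw [hc, hC]; exact_mod_cast congrArg (Nat.cast (R := ℝ)) h'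
  push_cast at hid ⊢
  have hmr : (m : ℝ) ≤ (j : ℝ) ^ 2 + 2 * j := by exact_mod_cast hm
  have hjr : (0 : ℝ) ≤ (j : ℝ) := Nat.cast_nonneg j
  have hmr0 : (0 : ℝ) ≤ (m : ℝ) := Nat.cast_nonneg m
  have hnpos : (0 : ℝ) < 3 * (j : ℝ) + 6 + m := by linarith
  have hBpos : (0 : ℝ) < (3 * (j : ℝ) + 6 + m) * ((j : ℝ) + 3 - 1) := by nlinarith
  rw [div_mul_eq_mul_div, lt_div_iff₀ hBpos]
  have key : ((j : ℝ) + 3) * ((j : ℝ) + 2) ^ 2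
      < (((j : ℝ) + 3) ^ 2 - (3 * (j : ℝ) + 6 + m)) * (3 * (j : ℝ) + 5 + m) := by
    nlinarith [mul_nonneg hmr0 (by linarith : (0:ℝ) ≤ (j:ℝ)^2 + 2*j - m),
      mul_nonneg (by linarith : (0:ℝ) ≤ (j:ℝ)^2 + 2*j - m) (by linarith : (0:ℝ) ≤ 2*(j:ℝ)+2)]
  have hid2 : (((j : ℝ) + 3) ^ 2 - (3 * (j : ℝ) + 6 + m)) *
        ((3 * (j : ℝ) + 6 + m) * (3 * (j : ℝ) + 5 + m) * c)
      = (((j : ℝ) + 3) ^ 2 - (3 * (j : ℝ) + 6 + m)) * (((j : ℝ) + 3) * ((j : ℝ) + 2) * C) := by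
    rw [hid]
  nlinarith [mul_lt_mul_of_pos_left key (mul_pos hcpos hnpos), hid2,
    mul_pos (by linarith : (0:ℝ) < (j:ℝ) + 3) (by linarith : (0:ℝ) < (j:ℝ) + 2),
    mul_pos hcpos hnpos]
end

section
/- Let G be a finite simple graph on vertex set V. Suppose M is a real symmetric V×V matrix such that M_{ij} ≥ 1 whenever {i,j} is not an edge of G (including i = j), and suppose the largest eigenvalue of M is at most λ. Then the independence number of G is at most λ. -/
open scoped Matrix

theorem stmt_7 {V : Type*} [Fintype V] [DecidableEq V] [Nonempty V]
    (G : SimpleGraph V) (M : Matrix V V ℝ) (hM : M.IsHermitian)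
    (hones : ∀ i j, ¬ G.Adj i j → 1 ≤ M i j)
    (lam : ℝ) (hlam : ∀ i, hM.eigenvalues i ≤ lam)
    (S : Finset V) (hS : ∀ u ∈ S, ∀ v ∈ S, ¬ G.Adj u v) :
    (S.card : ℝ) ≤ lam := by
  classical
  set U : Matrix V V ℝ := (hM.eigenvectorUnitary : Matrix V V ℝ)
  have hU : U ∈ Matrix.unitaryGroup V ℝ := hM.eigenvectorUnitary.2
  -- P = lam•1 - M is positive semidefinite
  have hP : (lam • (1 : Matrix V V ℝ) - M).PosSemidef := by
    have hdecomp : lam • (1 : Matrix V V ℝ) - M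
        = U * Matrix.diagonal (fun i => lam - hM.eigenvalues i) * star U := by
      have h1 : lam • (1 : Matrix V V ℝ) = U * (lam • (1 : Matrix V V ℝ)) * star U := by
        rw [Matrix.mul_smul, Matrix.mul_one, Matrix.smul_mul,
          (Matrix.mem_unitaryGroup_iff).mp hU]
      have h2 := hM.spectral_theorem
      calc lam • (1 : Matrix V V ℝ) - M
          = U * (lam • (1 : Matrix V V ℝ))  * star U
            - U * Matrix.diagonal (RCLike.ofReal ∘ hM.eigenvalues) * star U := by
            rw [← h1]; exact congrArg (lam • (1 : Matrix V V ℝ) - ·) h2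
        _ = U * (lam • (1 : Matrix V V ℝ)
              - Matrix.diagonal (RCLike.ofReal ∘ hM.eigenvalues)) * star U := by
            rw [Matrix.mul_sub, Matrix.sub_mul]
        _ = U * Matrix.diagonal (fun i => lam - hM.eigenvalues i) * star U := by
            congr 1
            congr 1
            ext i j
            rcases eq_or_ne i j with rfl | h
            · simp [Matrix.diagonal]
            · simp [Matrix.diagonal, Matrix.one_apply_ne h, h]
    rw [hdecomp]
    have hDiag : (Matrix.diagonal (fun i => lam - hM.eigenvalues i)).PosSemidef := by
      rw [Matrix.posSemidef_diagonal_iff]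
      intro i
      simpa using hlam i
    exact hDiag.mul_mul_conjTranspose_same U
  -- quadratic form inequality for any x
  have key : ∀ x : V → ℝ, x ⬝ᵥ (M *ᵥ x) ≤ lam * (x ⬝ᵥ x) := by
    intro x
    have h := hP.dotProduct_mulVec_nonneg x
    simp only [Matrix.sub_mulVec, Matrix.smul_mulVec, Matrix.one_mulVec,
      dotProduct_sub, dotProduct_smul, star_trivial, smul_eq_mul,
      RCLike.star_def] at h
    linarith [h]
  -- lam ≥ 1 (using any vertex)
  obtain ⟨v⟩ := (inferInstance : Nonempty V)
  have hlam1 : (1:ℝ) ≤ lam := by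
    have h := key (fun i => if i = v then 1 else 0)
    have h1 : (fun i => if i = v then (1:ℝ) else 0) ⬝ᵥ
        (M *ᵥ (fun i => if i = v then 1 else 0)) = M v v := by
      simp [dotProduct, Matrix.mulVec, Finset.sum_ite_eq',
        Finset.sum_ite_eq]
    have h2 : (fun i => if i = v then (1:ℝ) else 0) ⬝ᵥ
        (fun i => if i = v then (1:ℝ) else 0) = 1 := by
      simp [dotProduct, Finset.sum_ite_eq']
    rw [h1, h2, mul_one] at h
    have := hones v v G.irrefl
    linarith
  -- indicator vector
  set x : V → ℝ := fun i => if i ∈ S then 1 else 0 with hx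
  have hxx : x ⬝ᵥ x = S.card := by
    simp [hx, dotProduct, ite_and, Finset.sum_ite_mem]
  have hxMx : (S.card : ℝ) * S.card ≤ x ⬝ᵥ (M *ᵥ x) := by
    have : x ⬝ᵥ (M *ᵥ x) = ∑ i ∈ S, ∑ j ∈ S, M i j := by
      simp only [hx, dotProduct, Matrix.mulVec, dotProduct,
        mul_ite, ite_mul, one_mul, mul_one, zero_mul, mul_zero,
        Finset.sum_ite_mem, Finset.univ_inter]
    rw [this]
    calc (S.card : ℝ) * S.card = ∑ _i ∈ S, ∑ _j ∈ S, (1:ℝ) := by simp [mul_comm]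
      _ ≤ ∑ i ∈ S, ∑ j ∈ S, M i j := by
          apply Finset.sum_le_sum; intro i hi
          apply Finset.sum_le_sum; intro j hj
          exact hones i j (hS i hi j hj)
  have := (hxMx.trans (key x))
  rw [hxx] at this
  rcases Nat.eq_zero_or_pos S.card with h0 | hpos
  · rw [h0]; simpa using le_trans zero_le_one hlam1
  · have : (S.card : ℝ) * S.card ≤ lam * S.card := this
    have hc : (0:ℝ) < S.card := by exact_mod_cast hpos
    exact le_of_mul_le_mul_right this hc
end

section
/- Let G be a finite simple graph on vertex set V and let A be a real symmetric V×V matrix with A_{ij} = 1 whenever {i,j} is not an edge (including diagonal entries A_{ii} = 1). Then the independence number α(G) is at most the largest eigenvalue of A. -/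
open scoped Matrix Pointwise

theorem stmt_8 {V : Type*} [Fintype V] [DecidableEq V] [Nonempty V]
    (G : SimpleGraph V) (A : Matrix V V ℝ) (hA : A.IsHermitian)
    (hones : ∀ i j, ¬ G.Adj i j → A i j = 1)
    (S : Finset V) (hS : ∀ u ∈ S, ∀ v ∈ S, ¬ G.Adj u v) :
    (S.card : ℝ) ≤ ⨆ i, hA.eigenvalues i := by
  set μ : ℝ := ⨆ i, hA.eigenvalues i with hμ
  set B : Matrix V V ℝ := μ • (1 : Matrix V V ℝ) - A with hBdef
  have hB : B.IsHermitian := by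
    simp only [Matrix.IsHermitian, hBdef, Matrix.conjTranspose_sub,
      Matrix.conjTranspose_smul, Matrix.conjTranspose_one, hA.eq, star_trivial]
  -- B is positive semidefinite
  have hBspec : spectrum ℝ B = ({μ} : Set ℝ) - spectrum ℝ A := by
    rw [hBdef, show μ • (1 : Matrix V V ℝ) - A = algebraMap ℝ (Matrix V V ℝ) μ - A from by
      simp [Algebra.algebraMap_eq_smul_one], ← spectrum.singleton_sub_eq]
  have hPSD : B.PosSemidef := by
    apply hB.posSemidef_iff_eigenvalues_nonneg.mpr
    intro i
    show 0 ≤ hB.eigenvalues i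
    have hmem : hB.eigenvalues i ∈ spectrum ℝ B := hB.eigenvalues_mem_spectrum_real i
    rw [hBspec, Matrix.IsHermitian.spectrum_real_eq_range_eigenvalues hA] at hmem
    obtain ⟨a, ha, b, hb, hab⟩ := hmem
    obtain ⟨j, rfl⟩ := hb
    simp only [Set.mem_singleton_iff] at ha
    subst ha
    have : hA.eigenvalues j ≤ μ :=
      le_ciSup (Set.Finite.bddAbove (Set.finite_range _)) j
    have hab' : μ - hA.eigenvalues j = hB.eigenvalues i := hab
    linarith
  -- Test against the indicator vector of S
  set x : V → ℝ := fun v => if v ∈ S then 1 else 0 with hx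
  have hxx : x ⬝ᵥ x = (S.card : ℝ) := by
    simp [hx, dotProduct, ite_and, Finset.sum_ite_mem]
  have hxAx : x ⬝ᵥ (A *ᵥ x) = (S.card : ℝ) * (S.card : ℝ) := by
    have : ∀ i, (A *ᵥ x) i = ∑ j ∈ S, A i j := by
      intro i
      simp [Matrix.mulVec, dotProduct, hx, Finset.sum_ite_mem,
        mul_ite, mul_one, mul_zero]
    simp only [dotProduct, this]
    simp only [hx]
    simp only [ite_mul, one_mul, zero_mul]
    rw [Finset.sum_ite_mem, Finset.univ_inter]
    have : ∀ i ∈ S, ∑ j ∈ S, A i j = (S.card : ℝ) := by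
      intro i hi
      have : ∀ j ∈ S, A i j = 1 := fun j hj => hones i j (hS i hi j hj)
      rw [Finset.sum_congr rfl this]
      simp
    rw [Finset.sum_congr rfl this]
    simp [mul_comm]
  have h0 : 0 ≤ x ⬝ᵥ (B *ᵥ x) := by
    have := hPSD.dotProduct_mulVec_nonneg x
    simpa using this
  have hquad : x ⬝ᵥ (B *ᵥ x) = μ * (S.card : ℝ) - (S.card : ℝ) * (S.card : ℝ) := by
    rw [hBdef, Matrix.sub_mulVec, dotProduct_sub, Matrix.smul_mulVec,
      Matrix.one_mulVec, dotProduct_smul, hxx, hxAx]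
    simp
  rcases Finset.eq_empty_or_nonempty S with rfl | ⟨w, hw⟩
  · -- need 0 ≤ μ : use a diagonal entry
    obtain ⟨v⟩ := ‹Nonempty V›
    have hdiag : 0 ≤ μ - A v v := by
      have := hPSD.dotProduct_mulVec_nonneg (Pi.single v 1)
      have h := this
      simp only [hBdef, Matrix.sub_mulVec, dotProduct_sub,
        Matrix.smul_mulVec, Matrix.one_mulVec, dotProduct_smul] at h
      simpa [Matrix.mulVec, dotProduct, Pi.single_apply] using h
    have hAvv : A v v = 1 := hones v v (G.loopless.irrefl v)
    simp only [Finset.card_empty, Nat.cast_zero]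
    linarith
  · have hcard : (0 : ℝ) < S.card := by
      exact_mod_cast Finset.card_pos.mpr ⟨w, hw⟩
    rw [hquad] at h0
    nlinarith
end

section
/- For integers n, k with k ≥ 2 and 2k ≤ n ≤ k²−k+1, the quantity C(n−k−1, k−1) − (k−1)·C(n−k−1, k−2) is ≤ 0, with equality if and only if n = k². -/
theorem stmt_18 (n k : ℕ) (hk : 2 ≤ k) (hn1 : 2 * k ≤ n) (hn2 : n ≤ k ^ 2 - k + 1) :
    (Nat.choose (n - k - 1) (k - 1) : ℤ) -
        ((k : ℤ) - 1) * Nat.choose (n - k - 1) (k - 2) ≤ 0 ∧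
      ((Nat.choose (n - k - 1) (k - 1) : ℤ) -
          ((k : ℤ) - 1) * Nat.choose (n - k - 1) (k - 2) = 0 ↔ n = k ^ 2) := by
  have hk3 : 3 ≤ k := by
    by_contra h
    have hk2 : k = 2 := by omega
    subst hk2
    simp [pow_two] at hn2
    omega
  obtain ⟨j, rfl⟩ : ∃ j, k = j + 3 := ⟨k - 3, by omega⟩
  have hsq : (j + 3) ^ 2 = j * j + 6 * j + 9 := by ring
  set J := j * j with hJ
  rw [hsq] at hn2 ⊢
  have he1 : j + 3 - 1 = j + 2 := by norm_num
  have he2 : j + 3 - 2 = j + 1 := by omega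
  rw [he1, he2]
  set m := n - (j + 3) - 1 with hm
  set a := Nat.choose m (j + 2) with ha
  set b := Nat.choose m (j + 1) with hb
  have hbpos : 0 < b := Nat.choose_pos (by omega)
  have hid : a * (j + 2) = b * (m - (j + 1)) := Nat.choose_succ_right_eq m (j + 1)
  have hp1 : (j + 2) * (j + 2) = J + 4 * j + 4 := by rw [hJ]; ring
  have hlt : m - (j + 1) < (j + 2) * (j + 2) := by omega
  have hmain : a < b * (j + 2) := by
    have h1 : a * (j + 2) < b * (j + 2) * (j + 2) := by
      calc a * (j + 2) = b * (m - (j + 1)) := hid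
        _ < b * ((j + 2) * (j + 2)) := by
            exact mul_lt_mul_of_pos_left hlt hbpos
        _ = b * (j + 2) * (j + 2) := by ring
    exact Nat.lt_of_mul_lt_mul_right h1
  have hneg : (a : ℤ) - ((j : ℤ) + 3 - 1) * b < 0 := by
    have : (a : ℤ) < (b : ℤ) * ((j : ℤ) + 2) := by exact_mod_cast hmain
    linarith
  have hne : n ≠ J + 6 * j + 9 := by omega
  push_cast
  constructor
  · linarith
  · constructor
    · intro h; exfalso; linarith
    · intro h; exact absurd h hne
end

section
/- Let G be a finite simple graph. Define ϑ'(G) as the infimum of the largest eigenvalue over all real symmetric V×V matrices A with A_{ij} ≥ 1 for all non-adjacent pairs {i,j} (including diagonal), and ϑ(G) likewise with A_{ij} = 1 for non-adjacent pairs. Then α(G) ≤ ϑ'(G) ≤ ϑ(G). -/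
/-- Schrijver's variant `ϑ'(G)` of the Lovász number: the infimum of the largest
eigenvalue over all real symmetric matrices whose entries are `≥ 1` on all
non-adjacent pairs (including the diagonal). -/
noncomputable def schrijverTheta {V : Type*} [Fintype V] [DecidableEq V]
    (G : SimpleGraph V) : ℝ :=
  sInf {t : ℝ | ∃ M : Matrix V V ℝ, ∃ hM : M.IsHermitian,
    (∀ i j, ¬ G.Adj i j → 1 ≤ M i j) ∧ t = ⨆ i, hM.eigenvalues i}

/-- The Lovász number `ϑ(G)`: the infimum of the largest eigenvalue over all real
symmetric matrices whose entries equal `1` on all non-adjacent pairs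
(including the diagonal). -/
noncomputable def lovaszTheta {V : Type*} [Fintype V] [DecidableEq V]
    (G : SimpleGraph V) : ℝ :=
  sInf {t : ℝ | ∃ M : Matrix V V ℝ, ∃ hM : M.IsHermitian,
    (∀ i j, ¬ G.Adj i j → M i j = 1) ∧ t = ⨆ i, hM.eigenvalues i}

open Matrix in
private lemma quad_eq_aux {V : Type*} [Fintype V] [DecidableEq V]
    (M : Matrix V V ℝ) (hM : M.IsHermitian) (x : V → ℝ) :
    x ⬝ᵥ M *ᵥ x
      = ∑ i, hM.eigenvalues i * ((star (hM.eigenvectorUnitary : Matrix V V ℝ) *ᵥ x) i)^2 := by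
  set U := (hM.eigenvectorUnitary : Matrix V V ℝ) with hU
  set y := star U *ᵥ x with hy
  have hstar : star U = Uᵀ := by
    rw [Matrix.star_eq_conjTranspose, Matrix.conjTranspose_eq_transpose_of_trivial]
  have hvU : x ᵥ* U = y := by rw [hy, hstar, mulVec_transpose]
  conv_lhs => rw [hM.spectral_theorem, Unitary.conjStarAlgAut_apply]
  rw [← mulVec_mulVec, ← mulVec_mulVec, dotProduct_mulVec, hvU]
  simp only [dotProduct, mulVec_diagonal, ← hy, Function.comp, RCLike.ofReal_real_eq_id, id]
  exact Finset.sum_congr rfl fun i _ => by ring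

open Matrix in
private lemma norm_eq_aux {V : Type*} [Fintype V] [DecidableEq V]
    (M : Matrix V V ℝ) (hM : M.IsHermitian) (x : V → ℝ) :
    x ⬝ᵥ x = ∑ i, ((star (hM.eigenvectorUnitary : Matrix V V ℝ) *ᵥ x) i)^2 := by
  set U := (hM.eigenvectorUnitary : Matrix V V ℝ) with hU
  set y := star U *ᵥ x with hy
  have hx : x = U *ᵥ y := by
    rw [hy, mulVec_mulVec, (Matrix.mem_unitaryGroup_iff).mp hM.eigenvectorUnitary.2, one_mulVec]
  have hstar : star U = Uᵀ := by
    rw [Matrix.star_eq_conjTranspose, Matrix.conjTranspose_eq_transpose_of_trivial]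
  have hvU : x ᵥ* U = y := by rw [hy, hstar, mulVec_transpose]
  calc x ⬝ᵥ x = x ⬝ᵥ (U *ᵥ y) := by rw [← hx]
    _ = (x ᵥ* U) ⬝ᵥ y := dotProduct_mulVec x U y
    _ = ∑ i, y i ^ 2 := by rw [hvU]; simp [dotProduct, sq]

open Matrix in
private lemma rayleigh_aux {V : Type*} [Fintype V] [DecidableEq V] [Nonempty V]
    (M : Matrix V V ℝ) (hM : M.IsHermitian) (x : V → ℝ) :
    x ⬝ᵥ M *ᵥ x ≤ (⨆ i, hM.eigenvalues i) * (x ⬝ᵥ x) := by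
  rw [quad_eq_aux M hM x, norm_eq_aux M hM x, Finset.mul_sum]
  refine Finset.sum_le_sum fun i _ => ?_
  have h1 : hM.eigenvalues i ≤ ⨆ j, hM.eigenvalues j :=
    le_ciSup (Set.Finite.bddAbove (Set.finite_range _)) i
  exact mul_le_mul_of_nonneg_right h1 (sq_nonneg _)

open Matrix in
private lemma card_le_aux {V : Type*} [Fintype V] [DecidableEq V] [Nonempty V]
    {G : SimpleGraph V} (M : Matrix V V ℝ) (hM : M.IsHermitian)
    (hfeas : ∀ i j, ¬ G.Adj i j → 1 ≤ M i j)
    (S : Finset V) (hS : ∀ u ∈ S, ∀ v ∈ S, ¬ G.Adj u v) :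
    (S.card : ℝ) ≤ ⨆ i, hM.eigenvalues i := by
  set L := ⨆ i, hM.eigenvalues i with hL
  have key : ∀ T : Finset V, (∀ u ∈ T, ∀ v ∈ T, ¬ G.Adj u v) → T.Nonempty →
      (T.card : ℝ) ≤ L := by
    intro T hT hTne
    set x : V → ℝ := fun i => if i ∈ T then 1 else 0 with hx
    have hxx : x ⬝ᵥ x = (T.card : ℝ) := by
      simp [hx, dotProduct, ite_mul, Finset.sum_ite_mem]
    have hMx : x ⬝ᵥ M *ᵥ x = ∑ i ∈ T, ∑ j ∈ T, M i j := by
      simp [hx, dotProduct, mulVec, ite_mul, mul_ite, Finset.sum_ite_mem]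
    have hlow : (T.card : ℝ) * T.card ≤ x ⬝ᵥ M *ᵥ x := by
      rw [hMx]
      calc (T.card : ℝ) * T.card = ∑ _i ∈ T, ∑ _j ∈ T, (1 : ℝ) := by simp [mul_comm]
        _ ≤ ∑ i ∈ T, ∑ j ∈ T, M i j := by
            refine Finset.sum_le_sum fun i hi => Finset.sum_le_sum fun j hj => ?_
            exact hfeas i j (hT i hi j hj)
    have hup := rayleigh_aux M hM x
    rw [hxx] at hup
    have hpos : (0 : ℝ) < T.card := by exact_mod_cast Finset.card_pos.mpr hTne
    have := le_trans hlow hup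
    exact le_of_mul_le_mul_right (by linarith [this]) hpos
  rcases S.eq_empty_or_nonempty with rfl | hSne
  · have hv : ∃ v : V, True := ⟨Classical.arbitrary V, trivial⟩
    obtain ⟨v, -⟩ := hv
    have h1 : ((({v} : Finset V).card : ℝ)) ≤ L := by
      refine key {v} ?_ ⟨v, Finset.mem_singleton_self v⟩
      intro u hu w hw
      rw [Finset.mem_singleton] at hu hw
      subst hu; subst hw; exact G.irrefl
    simp only [Finset.card_singleton, Nat.cast_one] at h1
    simpa using le_trans zero_le_one h1
  · exact key S hS hSne

private lemma ones_feasible {V : Type*} [Fintype V] [DecidableEq V] (G : SimpleGraph V) :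
    ∃ t : ℝ, ∃ M : Matrix V V ℝ, ∃ hM : M.IsHermitian,
      (∀ i j, ¬ G.Adj i j → M i j = 1) ∧ t = ⨆ i, hM.eigenvalues i := by
  refine ⟨_, Matrix.of (fun _ _ => (1 : ℝ)), ?_, fun i j _ => rfl, rfl⟩
  ext i j
  simp [Matrix.conjTranspose_apply]

theorem stmt_19 {V : Type*} [Fintype V] [DecidableEq V] [Nonempty V]
    (G : SimpleGraph V) :
    (∀ S : Finset V, (∀ u ∈ S, ∀ v ∈ S, ¬ G.Adj u v) →
        (S.card : ℝ) ≤ schrijverTheta G) ∧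
      schrijverTheta G ≤ lovaszTheta G := by
  obtain ⟨t₀, M₀, hM₀, hfeas₀, ht₀⟩ := ones_feasible G
  have hne : {t : ℝ | ∃ M : Matrix V V ℝ, ∃ hM : M.IsHermitian,
      (∀ i j, ¬ G.Adj i j → 1 ≤ M i j) ∧ t = ⨆ i, hM.eigenvalues i}.Nonempty :=
    ⟨t₀, M₀, hM₀, fun i j h => (hfeas₀ i j h).ge, ht₀⟩
  constructor
  · intro S hS
    refine le_csInf hne ?_
    rintro t ⟨M, hM, hfeas, rfl⟩
    exact card_le_aux M hM hfeas S hS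
  · refine csInf_le_csInf ?_ ⟨t₀, M₀, hM₀, hfeas₀, ht₀⟩ ?_
    · refine ⟨0, ?_⟩
      rintro t ⟨M, hM, hfeas, rfl⟩
      have := card_le_aux M hM hfeas ∅ (by simp)
      simpa using this
    · rintro t ⟨M, hM, hfeas, ht⟩
      exact ⟨M, hM, fun i j h => (hfeas i j h).ge, ht⟩
end
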